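/- For every even integer n ≥ 2, the generating function of the type-D inversion statistic over fixed-point-free signed involutions in S_n^D satisfies (1−q²)^{n/2−1} · 𝒥𝒟_n(q) = 2q^{n/2} · ∏_{i=1}^{n/2−1} (1+q^{4i})(1−q^{4i+2}), where 𝒥𝒟_n(q) = Σ_{π∈J_n^D} q^{inv_D(π)}. -/

import Mathlib

noncomputable section
open Finset Polynomial

/-- Signed permutations of `{±1,…,±n}`, modeled as permutations `π` of `ℤ` satisfying
`π(-a) = -π(a)` for all `a` and fixing every integer of absolute value greater than `n`. -/
def SignedPerms (n : ℕ) : Set (Equiv.Perm ℤ) :=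
  {π | (∀ a : ℤ, π (-a) = -π a) ∧ ∀ a : ℤ, (n : ℤ) < |a| → π a = a}

/-- The set of involutions among the signed permutations: `I_n^B`. -/
def InvB (n : ℕ) : Set (Equiv.Perm ℤ) := {π ∈ SignedPerms n | π * π = 1}

/-- The number of inversions of the window `(π(1),…,π(n))`. -/
def winInv (n : ℕ) (π : Equiv.Perm ℤ) : ℕ :=
  (((Finset.Icc (1 : ℤ) n) ×ˢ (Finset.Icc (1 : ℤ) n)).filter
    (fun p => p.1 < p.2 ∧ π p.2 < π p.1)).card

/-- `N_1(π) = |{1 ≤ i ≤ n : π(i) < 0}|`. -/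
def negOnes (n : ℕ) (π : Equiv.Perm ℤ) : ℕ :=
  ((Finset.Icc (1 : ℤ) n).filter (fun i => π i < 0)).card

/-- `N_2(π) = |{1 ≤ i < j ≤ n : π(i) + π(j) < 0}|`. -/
def negPairs (n : ℕ) (π : Equiv.Perm ℤ) : ℕ :=
  (((Finset.Icc (1 : ℤ) n) ×ˢ (Finset.Icc (1 : ℤ) n)).filter
    (fun p => p.1 < p.2 ∧ π p.1 + π p.2 < 0)).card

/-- The type-B inversion statistic `inv_B = inv + N_1 + N_2`. -/
def invBStat (n : ℕ) (π : Equiv.Perm ℤ) : ℕ := winInv n π + negOnes n π + negPairs n π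

/-- The type-D inversion statistic `inv_D = inv + N_2`. -/
def invDStat (n : ℕ) (π : Equiv.Perm ℤ) : ℕ := winInv n π + negPairs n π

/-- `I_n^D`: signed involutions with an even number of negative window entries. -/
def InvD (n : ℕ) : Set (Equiv.Perm ℤ) := {π ∈ InvB n | Even (negOnes n π)}

/-- `I_n^O = I_n^B \ I_n^D`. -/
def InvO (n : ℕ) : Set (Equiv.Perm ℤ) := InvB n \ InvD n

/-- `J_n^D`: elements of `I_n^D` with `π(i) ≠ ±i` for all `1 ≤ i ≤ n`. -/
def JD (n : ℕ) : Set (Equiv.Perm ℤ) :=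
  {π ∈ InvD n | ∀ i ∈ Finset.Icc (1 : ℤ) n, π i ≠ i ∧ π i ≠ -i}

/-- `Inv_n^B(q) = Σ_{π ∈ I_n^B} q^{inv_B(π)}`. -/
def InvBPoly (n : ℕ) : Polynomial ℚ := ∑ᶠ π ∈ InvB n, Polynomial.X ^ invBStat n π

/-- `Inv_n^D(q) = Σ_{π ∈ I_n^D} q^{inv_D(π)}`. -/
def InvDPoly (n : ℕ) : Polynomial ℚ := ∑ᶠ π ∈ InvD n, Polynomial.X ^ invDStat n π

/-- `Inv_n^O(q) = Σ_{π ∈ I_n^O} q^{inv_D(π)}`. -/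
def InvOPoly (n : ℕ) : Polynomial ℚ := ∑ᶠ π ∈ InvO n, Polynomial.X ^ invDStat n π

/-- `𝒥𝒟_n(q) = Σ_{π ∈ J_n^D} q^{inv_D(π)}`. -/
def JDPoly (n : ℕ) : Polynomial ℚ := ∑ᶠ π ∈ JD n, Polynomial.X ^ invDStat n π
/-! ### Auxiliary development -/

/-- Order-preserving injection `ℤ → ℤ` skipping `±j`. -/
def Fm (j a : ℤ) : ℤ := if j ≤ a then a + 1 else if a ≤ -j then a - 1 else a

/-- One-sided inverse of `Fm j`. -/
def Hm (j a : ℤ) : ℤ := if j < a then a - 1 else if a < -j then a + 1 else a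

lemma Hm_Fm (j : ℤ) (hj : 1 ≤ j) (a : ℤ) : Hm j (Fm j a) = a := by
  simp only [Fm, Hm]; split_ifs <;> omega

lemma Fm_Hm (j : ℤ) (hj : 1 ≤ j) (a : ℤ) (h1 : a ≠ j) (h2 : a ≠ -j) : Fm j (Hm j a) = a := by
  simp only [Fm, Hm]; split_ifs <;> omega

lemma Fm_neg (j : ℤ) (hj : 1 ≤ j) (a : ℤ) : Fm j (-a) = -(Fm j a) := by
  simp only [Fm]; split_ifs <;> omega

lemma Hm_neg (j : ℤ) (hj : 1 ≤ j) (a : ℤ) : Hm j (-a) = -(Hm j a) := by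
  simp only [Hm]; split_ifs <;> omega

lemma Fm_lt_iff (j : ℤ) (hj : 1 ≤ j) (a b : ℤ) : Fm j a < Fm j b ↔ a < b := by
  simp only [Fm]; split_ifs <;> omega

lemma Fm_inj (j : ℤ) (hj : 1 ≤ j) (a b : ℤ) : Fm j a = Fm j b ↔ a = b := by
  simp only [Fm]; split_ifs <;> omega

lemma Fm_sum_neg (j : ℤ) (hj : 1 ≤ j) (a b : ℤ) : Fm j a + Fm j b < 0 ↔ a + b < 0 := by
  simp only [Fm]; split_ifs <;> omega

lemma Fm_ne_j (j : ℤ) (hj : 1 ≤ j) (a : ℤ) : Fm j a ≠ j ∧ Fm j a ≠ -j := by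
  simp only [Fm]; split_ifs <;> omega

lemma Fm_abs (j : ℤ) (hj : 1 ≤ j) (a : ℤ) : |Fm j a| ≤ |a| + 1 := by
  rw [abs_le]
  rcases abs_cases a with ⟨h1, h2⟩ | ⟨h1, h2⟩ <;> simp only [Fm] <;> split_ifs <;> omega

lemma Fm_bounds (N : ℕ) (j a : ℤ) (hj : 1 ≤ j) (hjN : j ≤ N + 1)
    (h1 : 1 ≤ a) (h2 : a ≤ N) : 1 ≤ Fm j a ∧ Fm j a ≤ N + 1 ∧ Fm j a ≠ j := by
  simp only [Fm]; split_ifs <;> omega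

lemma Hm_bounds (N : ℕ) (j a : ℤ) (hj : 1 ≤ j) (hjN : j ≤ N + 1)
    (h1 : 1 ≤ a) (h2 : a ≤ N + 2) (h3 : a ≠ j) (h4 : a ≠ N + 2) :
    1 ≤ Hm j a ∧ Hm j a ≤ N := by
  simp only [Hm]; split_ifs <;> omega

lemma Fm_neg_iff (j : ℤ) (hj : 1 ≤ j) (a : ℤ) : Fm j a < 0 ↔ a < 0 := by
  simp only [Fm]; split_ifs <;> omega

lemma Fm_zero_iff (j : ℤ) (hj : 1 ≤ j) (a : ℤ) : Fm j a = 0 ↔ a = 0 := by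
  simp only [Fm]; split_ifs <;> omega
/-- Context: hypotheses on the data `(j, s, p)` used to build an element of `JD (N+2)`. -/
structure Ctx (N : ℕ) (j s : ℤ) (p : Equiv.Perm ℤ) : Prop where
  hj : 1 ≤ j
  hjN : j ≤ (N : ℤ) + 1
  hs : s = 1 ∨ s = -1
  hodd : ∀ a, p (-a) = -(p a)
  hfix : ∀ a : ℤ, (N : ℤ) < |a| → p a = a
  hinv : ∀ a, p (p a) = a
  hfpf : ∀ a : ℤ, 1 ≤ a → a ≤ (N : ℤ) → p a ≠ a ∧ p a ≠ -a

namespace Ctx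

variable {N : ℕ} {j s : ℤ} {p : Equiv.Perm ℤ}

lemma p_abs (c : Ctx N j s p) (a : ℤ) (h : |a| ≤ (N : ℤ)) : |p a| ≤ (N : ℤ) := by
  by_contra hc
  push_neg at hc
  have h2 := c.hfix (p a) hc
  have h3 := c.hinv a
  rw [h2] at h3
  rw [h3] at hc
  omega

lemma p_zero (c : Ctx N j s p) : p 0 = 0 := by
  have := c.hodd 0
  simp at this
  omega

lemma hs_abs (c : Ctx N j s p) : |s| = 1 := by rcases c.hs with rfl | rfl <;> simp

end Ctx

/-- The raw insertion map: builds a fixed-point-free signed involution on `{±1,…,±n}`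
from one on `{±1,…,±(n-2)}` together with a pair `{j, n}` and a sign `s`. -/
def gfun (n j s : ℤ) (p : Equiv.Perm ℤ) (a : ℤ) : ℤ :=
  if a = j then s * n else if a = -j then -(s * n)
  else if a = n then s * j else if a = -n then -(s * j)
  else Fm j (p (Hm j a))

namespace Ctx

variable {N : ℕ} {j s : ℤ} {p : Equiv.Perm ℤ}

lemma g_at_j (c : Ctx N j s p) : gfun ((N : ℤ) + 2) j s p j = s * ((N : ℤ) + 2) := by
  unfold gfun; rw [if_pos rfl]

lemma g_at_negj (c : Ctx N j s p) : gfun ((N : ℤ) + 2) j s p (-j) = -(s * ((N : ℤ) + 2)) := by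
  have h1 : -j ≠ j := by have := c.hj; omega
  simp [gfun, h1]

lemma g_at_n (c : Ctx N j s p) : gfun ((N : ℤ) + 2) j s p ((N : ℤ) + 2) = s * j := by
  have h1 : (N : ℤ) + 2 ≠ j := by have := c.hjN; omega
  have h2 : (N : ℤ) + 2 ≠ -j := by have := c.hj; omega
  simp [gfun, h1, h2]

lemma g_at_negn (c : Ctx N j s p) : gfun ((N : ℤ) + 2) j s p (-((N : ℤ) + 2)) = -(s * j) := by
  have h1 : -((N : ℤ) + 2) ≠ j := by have := c.hj; omega
  have h2 : -((N : ℤ) + 2) ≠ -j := by have := c.hjN; omega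
  have h3 : -((N : ℤ) + 2) ≠ (N : ℤ) + 2 := by omega
  unfold gfun
  rw [if_neg h1, if_neg h2, if_neg h3, if_pos rfl]

lemma g_T (c : Ctx N j s p) (a : ℤ) (h1 : a ≠ j) (h2 : a ≠ -j) (h3 : a ≠ (N : ℤ) + 2)
    (h4 : a ≠ -((N : ℤ) + 2)) :
    gfun ((N : ℤ) + 2) j s p a = Fm j (p (Hm j a)) := by
  unfold gfun
  rw [if_neg h1, if_neg h2, if_neg h3, if_neg h4]

/-- On the generic branch the value stays in the window and avoids `±j, ±n`. -/
lemma g_T_props (c : Ctx N j s p) (a : ℤ) (hB : |Hm j a| ≤ (N : ℤ)) :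
    -((N : ℤ) + 1) ≤ Fm j (p (Hm j a)) ∧ Fm j (p (Hm j a)) ≤ (N : ℤ) + 1 ∧
      Fm j (p (Hm j a)) ≠ j ∧ Fm j (p (Hm j a)) ≠ -j := by
  have h1 := c.p_abs (Hm j a) hB
  have h2 := Fm_abs j c.hj (p (Hm j a))
  have h3 := Fm_ne_j j c.hj (p (Hm j a))
  have h4 : |Fm j (p (Hm j a))| ≤ (N : ℤ) + 1 := by omega
  have h5 := abs_le.mp h4
  exact ⟨h5.1, h5.2, h3.1, h3.2⟩

lemma g_invol (c : Ctx N j s p) : Function.Involutive (gfun ((N : ℤ) + 2) j s p) := by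
  intro a
  have hj := c.hj
  have hjN := c.hjN
  by_cases h1 : a = j
  · subst h1
    rcases c.hs with rfl | rfl
    · rw [c.g_at_j]; rw [one_mul, c.g_at_n]; ring
    · rw [c.g_at_j]
      rw [show (-1 : ℤ) * ((N : ℤ) + 2) = -((N : ℤ) + 2) by ring, c.g_at_negn]; ring
  by_cases h2 : a = -j
  · subst h2
    rcases c.hs with rfl | rfl
    · rw [c.g_at_negj]
      rw [show -((1 : ℤ) * ((N : ℤ) + 2)) = -((N : ℤ) + 2) by ring, c.g_at_negn]; ring
    · rw [c.g_at_negj]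
      rw [show -((-1 : ℤ) * ((N : ℤ) + 2)) = ((N : ℤ) + 2) by ring, c.g_at_n]; ring
  by_cases h3 : a = (N : ℤ) + 2
  · subst h3
    rcases c.hs with rfl | rfl
    · rw [c.g_at_n, one_mul, c.g_at_j]; ring
    · rw [c.g_at_n, show (-1 : ℤ) * j = -j by ring, c.g_at_negj]; ring
  by_cases h4 : a = -((N : ℤ) + 2)
  · subst h4
    rcases c.hs with rfl | rfl
    · rw [c.g_at_negn, show -((1:ℤ) * j) = -j by ring, c.g_at_negj]; ring
    · rw [c.g_at_negn, show -((-1:ℤ) * j) = j by ring, c.g_at_j]; ring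
  -- generic case
  rw [c.g_T a h1 h2 h3 h4]
  by_cases hB : |Hm j a| ≤ (N : ℤ)
  · obtain ⟨hb0, hb1, hb2, hb3⟩ := c.g_T_props a hB
    rw [c.g_T _ hb2 hb3 (by omega) (by omega), Hm_Fm j hj _, c.hinv, Fm_Hm j hj a h1 h2]
  · push_neg at hB
    have hfix1 : p (Hm j a) = Hm j a := c.hfix _ hB
    rw [hfix1, Fm_Hm j hj a h1 h2]
    rw [c.g_T a h1 h2 h3 h4, hfix1, Fm_Hm j hj a h1 h2]

end Ctx

open scoped Classical in
/-- The insertion map as a permutation (junk value `1` when not involutive). -/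
def gperm (N : ℕ) (j s : ℤ) (p : Equiv.Perm ℤ) : Equiv.Perm ℤ :=
  if h : Function.Involutive (gfun ((N : ℤ) + 2) j s p) then h.toPerm else 1

lemma Ctx.gperm_apply {N : ℕ} {j s : ℤ} {p : Equiv.Perm ℤ} (c : Ctx N j s p) (a : ℤ) :
    gperm N j s p a = gfun ((N : ℤ) + 2) j s p a := by
  rw [gperm, dif_pos c.g_invol]
  rfl
namespace Ctx

variable {N : ℕ} {j s : ℤ} {p : Equiv.Perm ℤ}

lemma g_odd (c : Ctx N j s p) (a : ℤ) :
    gfun ((N : ℤ) + 2) j s p (-a) = -(gfun ((N : ℤ) + 2) j s p a) := by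
  have hj := c.hj
  have hjN := c.hjN
  by_cases h1 : a = j
  · subst h1; rw [c.g_at_negj, c.g_at_j]
  by_cases h2 : a = -j
  · subst h2; rw [neg_neg, c.g_at_j, c.g_at_negj, neg_neg]
  by_cases h3 : a = (N : ℤ) + 2
  · subst h3; rw [c.g_at_negn, c.g_at_n]
  by_cases h4 : a = -((N : ℤ) + 2)
  · subst h4; rw [neg_neg, c.g_at_n, c.g_at_negn, neg_neg]
  rw [c.g_T a h1 h2 h3 h4, c.g_T (-a) (by omega) (by omega) (by omega) (by omega),
    Hm_neg j hj a, c.hodd, Fm_neg j hj]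

lemma g_fix (c : Ctx N j s p) (a : ℤ) (h : (N : ℤ) + 2 < |a|) :
    gfun ((N : ℤ) + 2) j s p a = a := by
  have hj := c.hj
  have hjN := c.hjN
  rcases abs_cases a with ⟨he, h0⟩ | ⟨he, h0⟩
  · have ha : (N : ℤ) + 2 < a := by omega
    rw [c.g_T a (by omega) (by omega) (by omega) (by omega)]
    have h5 : Hm j a = a - 1 := by simp only [Hm]; rw [if_pos (by omega)]
    have h6 : p (a - 1) = a - 1 := c.hfix _ (by rw [abs_of_nonneg (by omega)]; omega)
    rw [h5, h6]
    simp only [Fm]; rw [if_pos (by omega)]; ring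
  · have ha : a < -((N : ℤ) + 2) := by omega
    rw [c.g_T a (by omega) (by omega) (by omega) (by omega)]
    have h5 : Hm j a = a + 1 := by simp only [Hm]; rw [if_neg (by omega), if_pos (by omega)]
    have h6 : p (a + 1) = a + 1 := c.hfix _ (by rw [abs_of_nonpos (by omega)]; omega)
    rw [h5, h6]
    simp only [Fm]; rw [if_neg (by omega), if_pos (by omega)]; ring

lemma g_fpf (c : Ctx N j s p) (i : ℤ) (h1 : 1 ≤ i) (h2 : i ≤ (N : ℤ) + 2) :
    gfun ((N : ℤ) + 2) j s p i ≠ i ∧ gfun ((N : ℤ) + 2) j s p i ≠ -i := by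
  have hj := c.hj
  have hjN := c.hjN
  by_cases hi1 : i = j
  · subst hi1
    rw [c.g_at_j]
    rcases c.hs with rfl | rfl <;> constructor <;> intro hc <;> omega
  by_cases hi2 : i = (N : ℤ) + 2
  · subst hi2
    rw [c.g_at_n]
    rcases c.hs with rfl | rfl <;> constructor <;> intro hc <;> omega
  have hb := Hm_bounds N j i hj hjN h1 h2 hi1 hi2
  rw [c.g_T i hi1 (by omega) hi2 (by omega)]
  constructor
  · intro hc
    have h3 := congrArg (Hm j) hc
    rw [Hm_Fm j hj] at h3
    exact (c.hfpf _ hb.1 hb.2).1 h3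
  · intro hc
    have h3 := congrArg (Hm j) hc
    rw [Hm_Fm j hj, Hm_neg j hj] at h3
    exact (c.hfpf _ hb.1 hb.2).2 h3

end Ctx

lemma mem_JD_iff (n : ℕ) (π : Equiv.Perm ℤ) :
    π ∈ JD n ↔ (∀ a, π (-a) = -(π a)) ∧ (∀ a : ℤ, (n : ℤ) < |a| → π a = a) ∧
      (∀ a, π (π a) = a) ∧ Even (negOnes n π) ∧
      ∀ i : ℤ, 1 ≤ i → i ≤ (n : ℤ) → π i ≠ i ∧ π i ≠ -i := by
  constructor
  · rintro ⟨⟨⟨⟨hodd, hfix⟩, hinv⟩, heven⟩, hfpf⟩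
    refine ⟨hodd, hfix, ?_, heven, ?_⟩
    · intro a
      have := Equiv.ext_iff.mp hinv a
      simpa [Equiv.Perm.mul_apply] using this
    · intro i hi1 hi2
      exact hfpf i (Finset.mem_Icc.mpr ⟨hi1, hi2⟩)
  · rintro ⟨hodd, hfix, hinv, heven, hfpf⟩
    refine ⟨⟨⟨⟨hodd, hfix⟩, ?_⟩, heven⟩, ?_⟩
    · ext a
      simpa [Equiv.Perm.mul_apply] using hinv a
    · intro i hi
      rw [Finset.mem_Icc] at hi
      exact hfpf i hi.1 hi.2
/-- Combined per-pair inversion weight. -/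
def wstat (π : Equiv.Perm ℤ) (a b : ℤ) : ℕ :=
  (if a < b ∧ π b < π a then 1 else 0) + (if a < b ∧ π a + π b < 0 then 1 else 0)

lemma invDStat_eq_sum (n : ℕ) (π : Equiv.Perm ℤ) :
    invDStat n π = ∑ a ∈ Finset.Icc (1:ℤ) (n:ℤ), ∑ b ∈ Finset.Icc (1:ℤ) (n:ℤ), wstat π a b := by
  unfold invDStat winInv negPairs wstat
  rw [Finset.card_filter, Finset.card_filter, Finset.sum_product, Finset.sum_product,
    ← Finset.sum_add_distrib]
  refine Finset.sum_congr rfl fun a _ => ?_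
  rw [← Finset.sum_add_distrib]

lemma negOnes_eq_sum (n : ℕ) (π : Equiv.Perm ℤ) :
    negOnes n π = ∑ a ∈ Finset.Icc (1:ℤ) (n:ℤ), if π a < 0 then 1 else 0 := by
  unfold negOnes
  rw [Finset.card_filter]

lemma wstat_diag (π : Equiv.Perm ℤ) (a : ℤ) : wstat π a a = 0 := by
  simp [wstat]

/-- The window minus `{j, n}`, as the image of the smaller window under `Fm j`. -/
def SF (N : ℕ) (j : ℤ) : Finset ℤ := (Finset.Icc (1:ℤ) (N:ℤ)).image (Fm j)

lemma mem_SF {N : ℕ} {j : ℤ} (hj : 1 ≤ j) (hjN : j ≤ (N:ℤ)+1) (a : ℤ) :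
    a ∈ SF N j ↔ 1 ≤ a ∧ a ≤ (N:ℤ)+1 ∧ a ≠ j := by
  unfold SF
  simp only [Finset.mem_image, Finset.mem_Icc]
  constructor
  · rintro ⟨b, ⟨hb1, hb2⟩, rfl⟩
    have h := Fm_bounds N j b hj hjN hb1 hb2
    exact ⟨h.1, h.2.1, h.2.2⟩
  · rintro ⟨h1, h2, h3⟩
    refine ⟨Hm j a, ?_, Fm_Hm j hj a h3 (by omega)⟩
    have h := Hm_bounds N j a hj hjN h1 (by omega) h3 (by omega)
    exact ⟨h.1, h.2⟩

lemma Icc_decomp {N : ℕ} {j : ℤ} (hj : 1 ≤ j) (hjN : j ≤ (N:ℤ)+1) :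
    Finset.Icc (1:ℤ) ((N:ℤ)+2) = insert j (insert ((N:ℤ)+2) (SF N j)) := by
  ext a
  simp only [Finset.mem_insert, Finset.mem_Icc, mem_SF hj hjN]
  omega

lemma j_notmem {N : ℕ} {j : ℤ} (hj : 1 ≤ j) (hjN : j ≤ (N:ℤ)+1) :
    j ∉ insert ((N:ℤ)+2) (SF N j) := by
  simp only [Finset.mem_insert, mem_SF hj hjN]
  omega

lemma n_notmem {N : ℕ} {j : ℤ} (hj : 1 ≤ j) (hjN : j ≤ (N:ℤ)+1) :
    ((N:ℤ)+2) ∉ SF N j := by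
  simp only [mem_SF hj hjN]
  omega

lemma card_SF {N : ℕ} {j : ℤ} (hj : 1 ≤ j) : (SF N j).card = N := by
  unfold SF
  rw [Finset.card_image_of_injective _ (fun a b h => (Fm_inj j hj a b).mp h), Int.card_Icc]
  omega

lemma card_SF_gt {N : ℕ} {j : ℤ} (hj : 1 ≤ j) (hjN : j ≤ (N:ℤ)+1) :
    (((SF N j).filter (fun a => j < a)).card : ℤ) = (N:ℤ)+1-j := by
  have h : (SF N j).filter (fun a => j < a) = Finset.Icc (j+1) ((N:ℤ)+1) := by
    ext a
    simp only [Finset.mem_filter, mem_SF hj hjN, Finset.mem_Icc]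
    omega
  rw [h, Int.card_Icc, Int.toNat_of_nonneg (by omega)]
  ring

lemma card_SF_lt {N : ℕ} {j : ℤ} (hj : 1 ≤ j) (hjN : j ≤ (N:ℤ)+1) :
    (((SF N j).filter (fun a => a < j)).card : ℤ) = j-1 := by
  have h : (SF N j).filter (fun a => a < j) = Finset.Icc (1:ℤ) (j-1) := by
    ext a
    simp only [Finset.mem_filter, mem_SF hj hjN, Finset.mem_Icc]
    omega
  rw [h, Int.card_Icc, Int.toNat_of_nonneg (by omega)]
  ring

lemma double_sum_insert {M : Type*} [AddCommMonoid M] (x y : ℤ) (T : Finset ℤ)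
    (hx : x ∉ insert y T) (hy : y ∉ T) (f : ℤ → ℤ → M) :
    ∑ a ∈ insert x (insert y T), ∑ b ∈ insert x (insert y T), f a b
      = f x x + f x y + f y x + f y y + (∑ b ∈ T, (f x b + f b x))
        + (∑ b ∈ T, (f y b + f b y)) + ∑ a ∈ T, ∑ b ∈ T, f a b := by
  simp only [Finset.sum_insert hx, Finset.sum_insert hy, Finset.sum_add_distrib]
  abel

namespace Ctx

variable {N : ℕ} {j s : ℤ} {p : Equiv.Perm ℤ}

lemma gperm_odd (c : Ctx N j s p) (a : ℤ) :
    gperm N j s p (-a) = -(gperm N j s p a) := by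
  rw [c.gperm_apply, c.gperm_apply, c.g_odd]

lemma gperm_invol (c : Ctx N j s p) (a : ℤ) :
    gperm N j s p (gperm N j s p a) = a := by
  rw [c.gperm_apply, c.gperm_apply]
  exact c.g_invol a

lemma g_SF_props (c : Ctx N j s p) (a : ℤ) (ha : a ∈ SF N j) :
    -((N:ℤ)+1) ≤ gperm N j s p a ∧ gperm N j s p a ≤ (N:ℤ)+1 ∧
      gperm N j s p a ≠ j ∧ gperm N j s p a ≠ -j ∧ gperm N j s p a ≠ 0 := by
  rw [mem_SF c.hj c.hjN] at ha
  have hj := c.hj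
  have hjN := c.hjN
  have hb := Hm_bounds N j a c.hj c.hjN ha.1 (by omega) ha.2.2 (by omega)
  rw [c.gperm_apply, c.g_T a ha.2.2 (by omega) (by omega) (by omega)]
  have h0 := c.g_T_props a (by rw [abs_le]; omega)
  have hpz : p (Hm j a) ≠ 0 := by
    intro hz
    have h := c.hinv (Hm j a)
    rw [hz, c.p_zero] at h
    omega
  have hz2 : Fm j (p (Hm j a)) ≠ 0 := by
    rw [Ne, Fm_zero_iff j c.hj]
    exact hpz
  exact ⟨h0.1, h0.2.1, h0.2.2.1, h0.2.2.2, hz2⟩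

lemma g_abs_mem (c : Ctx N j s p) (a : ℤ) (ha : a ∈ SF N j) :
    |gperm N j s p a| ∈ SF N j := by
  obtain ⟨h1, h2, h3, h4, h5⟩ := c.g_SF_props a ha
  rw [mem_SF c.hj c.hjN]
  rcases abs_cases (gperm N j s p a) with ⟨he, _⟩ | ⟨he, _⟩ <;> rw [he] <;>
    refine ⟨by omega, by omega, by omega⟩

lemma g_abs_invol (c : Ctx N j s p) (a : ℤ) (ha : a ∈ SF N j) :
    |gperm N j s p (|gperm N j s p a|)| = a := by
  have ha' := (mem_SF c.hj c.hjN a).mp ha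
  have hinv := c.gperm_invol a
  rcases abs_cases (gperm N j s p a) with ⟨he, _⟩ | ⟨he, _⟩
  · rw [he, hinv, abs_of_nonneg (by omega)]
  · rw [he, c.gperm_odd, hinv, abs_neg, abs_of_nonneg (by omega)]

lemma card_filter_abs (c : Ctx N j s p) (Q : ℤ → Prop) [DecidablePred Q] :
    ((SF N j).filter (fun a => Q |gperm N j s p a|)).card
      = ((SF N j).filter Q).card := by
  apply Finset.card_bij' (fun a _ => |gperm N j s p a|) (fun a _ => |gperm N j s p a|)
  · intro a ha
    rw [Finset.mem_filter] at *
    exact ⟨c.g_abs_mem a ha.1, ha.2⟩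
  · intro a ha
    rw [Finset.mem_filter] at *
    refine ⟨c.g_abs_mem a ha.1, ?_⟩
    rw [c.g_abs_invol a ha.1]
    exact ha.2
  · intro a ha
    exact c.g_abs_invol a (Finset.mem_filter.mp ha).1
  · intro a ha
    exact c.g_abs_invol a (Finset.mem_filter.mp ha).1

lemma g_Fm (c : Ctx N j s p) (a : ℤ) (ha1 : 1 ≤ a) (ha2 : a ≤ (N:ℤ)) :
    gperm N j s p (Fm j a) = Fm j (p a) := by
  have hb := Fm_bounds N j a c.hj c.hjN ha1 ha2
  have hne := Fm_ne_j j c.hj a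
  rw [c.gperm_apply, c.g_T _ hne.1 hne.2 (by omega) (by omega), Hm_Fm j c.hj]

lemma w_SF_SF (c : Ctx N j s p) (a b : ℤ) (ha1 : 1 ≤ a) (ha2 : a ≤ (N:ℤ))
    (hb1 : 1 ≤ b) (hb2 : b ≤ (N:ℤ)) :
    wstat (gperm N j s p) (Fm j a) (Fm j b) = wstat p a b := by
  unfold wstat
  rw [c.g_Fm a ha1 ha2, c.g_Fm b hb1 hb2]
  simp only [Fm_lt_iff j c.hj, Fm_sum_neg j c.hj]

lemma w_cross_j (c : Ctx N j s p) (a : ℤ) (ha : a ∈ SF N j) :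
    wstat (gperm N j s p) j a + wstat (gperm N j s p) a j
      = if s = 1 then (if j < a then 1 else 0) else (if j < a then 1 else 2) := by
  obtain ⟨h1, h2, h3, h4, h5⟩ := c.g_SF_props a ha
  have ha' := (mem_SF c.hj c.hjN a).mp ha
  have hj := c.hj
  have hjN := c.hjN
  have hgj : gperm N j s p j = s * ((N:ℤ)+2) := by rw [c.gperm_apply, c.g_at_j]
  unfold wstat
  rw [hgj]
  rcases c.hs with rfl | rfl <;> split_ifs <;> first | omega | exact ‹False›.elim

lemma w_cross_n (c : Ctx N j s p) (a : ℤ) (ha : a ∈ SF N j) :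
    wstat (gperm N j s p) ((N:ℤ)+2) a + wstat (gperm N j s p) a ((N:ℤ)+2)
      = if s = 1 then (if j < |gperm N j s p a| then 1 else 0)
        else (1 + if |gperm N j s p a| < j then 1 else 0) := by
  obtain ⟨h1, h2, h3, h4, h5⟩ := c.g_SF_props a ha
  have ha' := (mem_SF c.hj c.hjN a).mp ha
  have hjN := c.hjN
  have hj := c.hj
  have hgn : gperm N j s p ((N:ℤ)+2) = s * j := by rw [c.gperm_apply, c.g_at_n]
  unfold wstat
  rw [hgn]
  rcases abs_cases (gperm N j s p a) with ⟨he, _⟩ | ⟨he, _⟩ <;> rw [he] <;>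
    rcases c.hs with rfl | rfl <;> split_ifs <;> first | omega | exact ‹False›.elim

lemma w_j_n (c : Ctx N j s p) :
    wstat (gperm N j s p) j ((N:ℤ)+2) = 1 := by
  have hjN := c.hjN
  have hj := c.hj
  have hgj : gperm N j s p j = s * ((N:ℤ)+2) := by rw [c.gperm_apply, c.g_at_j]
  have hgn : gperm N j s p ((N:ℤ)+2) = s * j := by rw [c.gperm_apply, c.g_at_n]
  unfold wstat
  rw [hgj, hgn]
  rcases c.hs with rfl | rfl <;> split_ifs <;> first | omega | exact ‹False›.elim

lemma w_n_j (c : Ctx N j s p) :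
    wstat (gperm N j s p) ((N:ℤ)+2) j = 0 := by
  have hjN := c.hjN
  unfold wstat
  split_ifs <;> omega

lemma w_n_SF (c : Ctx N j s p) (a : ℤ) (ha : a ∈ SF N j) :
    wstat (gperm N j s p) ((N:ℤ)+2) a = 0 := by
  have ha' := (mem_SF c.hj c.hjN a).mp ha
  unfold wstat
  split_ifs <;> omega

end Ctx
namespace Ctx

variable {N : ℕ} {p : Equiv.Perm ℤ}

lemma w_cross_j_pos {j : ℤ} (c : Ctx N j 1 p) (a : ℤ) (ha : a ∈ SF N j) :
    wstat (gperm N j 1 p) j a + wstat (gperm N j 1 p) a j = if j < a then 1 else 0 := by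
  have h := c.w_cross_j a ha
  rwa [if_pos rfl] at h

lemma w_cross_j_neg {j : ℤ} (c : Ctx N j (-1) p) (a : ℤ) (ha : a ∈ SF N j) :
    wstat (gperm N j (-1) p) j a + wstat (gperm N j (-1) p) a j
      = if j < a then 1 else 2 := by
  have h := c.w_cross_j a ha
  rwa [if_neg (by norm_num)] at h

lemma w_cross_n_pos {j : ℤ} (c : Ctx N j 1 p) (a : ℤ) (ha : a ∈ SF N j) :
    wstat (gperm N j 1 p) ((N:ℤ)+2) a + wstat (gperm N j 1 p) a ((N:ℤ)+2)
      = if j < |gperm N j 1 p a| then 1 else 0 := by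
  have h := c.w_cross_n a ha
  rwa [if_pos rfl] at h

lemma w_cross_n_neg {j : ℤ} (c : Ctx N j (-1) p) (a : ℤ) (ha : a ∈ SF N j) :
    wstat (gperm N j (-1) p) ((N:ℤ)+2) a + wstat (gperm N j (-1) p) a ((N:ℤ)+2)
      = 1 + if |gperm N j (-1) p a| < j then 1 else 0 := by
  have h := c.w_cross_n a ha
  rwa [if_neg (by norm_num)] at h

lemma double_sum_SF {j s : ℤ} (c : Ctx N j s p) :
    ∑ a ∈ SF N j, ∑ b ∈ SF N j, wstat (gperm N j s p) a b
      = ∑ a ∈ Finset.Icc (1:ℤ) (N:ℤ), ∑ b ∈ Finset.Icc (1:ℤ) (N:ℤ), wstat p a b := by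
  have hj := c.hj
  rw [show SF N j = (Finset.Icc (1:ℤ) (N:ℤ)).image (Fm j) from rfl,
    Finset.sum_image (fun a _ b _ h => (Fm_inj j hj a b).mp h)]
  refine Finset.sum_congr rfl fun a haa => ?_
  rw [Finset.sum_image (fun a _ b _ h => (Fm_inj j hj a b).mp h)]
  refine Finset.sum_congr rfl fun b hbb => ?_
  rw [Finset.mem_Icc] at haa hbb
  exact c.w_SF_SF a b haa.1 haa.2 hbb.1 hbb.2

lemma invD_step_pos {jn : ℕ} (c : Ctx N (jn:ℤ) 1 p) :
    invDStat (N+2) (gperm N (jn:ℤ) 1 p) = invDStat N p + (2*(N+1-jn)+1) := by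
  have hj := c.hj
  have hjN := c.hjN
  have hc : ((N+2:ℕ):ℤ) = (N:ℤ)+2 := by push_cast; ring
  rw [invDStat_eq_sum, invDStat_eq_sum, hc, Icc_decomp hj hjN,
    double_sum_insert _ _ _ (j_notmem hj hjN) (n_notmem hj hjN),
    wstat_diag, wstat_diag, c.w_j_n, c.w_n_j,
    Finset.sum_congr rfl (fun b hb => c.w_cross_j_pos b hb),
    Finset.sum_congr rfl (fun b hb => c.w_cross_n_pos b hb),
    c.double_sum_SF, ← Finset.card_filter, ← Finset.card_filter,
    c.card_filter_abs (fun x => (jn:ℤ) < x)]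
  have h1 := card_SF_gt hj hjN
  have h2 : (1:ℤ) ≤ jn := hj
  omega

lemma invD_step_neg {jn : ℕ} (c : Ctx N (jn:ℤ) (-1) p) :
    invDStat (N+2) (gperm N (jn:ℤ) (-1) p) = invDStat N p + (2*N+2*jn-1) := by
  have hj := c.hj
  have hjN := c.hjN
  have hc : ((N+2:ℕ):ℤ) = (N:ℤ)+2 := by push_cast; ring
  have hJ : ∑ b ∈ SF N (jn:ℤ), (if (jn:ℤ) < b then 1 else 2)
      = (SF N (jn:ℤ)).card + ((SF N (jn:ℤ)).filter (fun b => b < (jn:ℤ))).card := by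
    rw [Finset.card_eq_sum_ones, Finset.card_filter, ← Finset.sum_add_distrib]
    refine Finset.sum_congr rfl fun b hb => ?_
    have hbb := (mem_SF hj hjN b).mp hb
    split_ifs <;> omega
  have hN : ∑ b ∈ SF N (jn:ℤ), (1 + if |gperm N (jn:ℤ) (-1) p b| < (jn:ℤ) then 1 else 0)
      = (SF N (jn:ℤ)).card
        + ((SF N (jn:ℤ)).filter (fun b => |gperm N (jn:ℤ) (-1) p b| < (jn:ℤ))).card := by
    rw [Finset.card_eq_sum_ones, Finset.card_filter, ← Finset.sum_add_distrib]
  rw [invDStat_eq_sum, invDStat_eq_sum, hc, Icc_decomp hj hjN,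
    double_sum_insert _ _ _ (j_notmem hj hjN) (n_notmem hj hjN),
    wstat_diag, wstat_diag, c.w_j_n, c.w_n_j,
    Finset.sum_congr rfl (fun b hb => c.w_cross_j_neg b hb),
    Finset.sum_congr rfl (fun b hb => c.w_cross_n_neg b hb),
    c.double_sum_SF, hJ, hN,
    c.card_filter_abs (fun x => x < (jn:ℤ))]
  have h1 := card_SF_lt hj hjN
  have h2 : (1:ℤ) ≤ jn := hj
  have h3 := card_SF (N := N) hj
  omega

lemma negOnes_step {j s : ℤ} (c : Ctx N j s p) :
    negOnes (N+2) (gperm N j s p) = negOnes N p + (if s = 1 then 0 else 2) := by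
  have hj := c.hj
  have hjN := c.hjN
  have hc : ((N+2:ℕ):ℤ) = (N:ℤ)+2 := by push_cast; ring
  have hgj : gperm N j s p j = s * ((N:ℤ)+2) := by rw [c.gperm_apply, c.g_at_j]
  have hgn : gperm N j s p ((N:ℤ)+2) = s * j := by rw [c.gperm_apply, c.g_at_n]
  have hSF : ∑ a ∈ SF N j, (if gperm N j s p a < 0 then 1 else 0)
      = ∑ a ∈ Finset.Icc (1:ℤ) (N:ℤ), if p a < 0 then 1 else 0 := by
    rw [show SF N j = (Finset.Icc (1:ℤ) (N:ℤ)).image (Fm j) from rfl,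
      Finset.sum_image (fun a _ b _ h => (Fm_inj j hj a b).mp h)]
    refine Finset.sum_congr rfl fun a haa => ?_
    rw [Finset.mem_Icc] at haa
    rw [c.g_Fm a haa.1 haa.2]
    simp only [Fm_neg_iff j hj]
  rw [negOnes_eq_sum, negOnes_eq_sum, hc, Icc_decomp hj hjN,
    Finset.sum_insert (j_notmem hj hjN), Finset.sum_insert (n_notmem hj hjN),
    hgj, hgn, hSF]
  rcases c.hs with rfl | rfl
  · rw [if_neg (by omega), if_neg (by omega), if_pos rfl]
    omega
  · rw [if_pos (by omega), if_pos (by omega), if_neg (by norm_num)]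
    omega

lemma mem_step {j s : ℤ} (c : Ctx N j s p) (hev : Even (negOnes N p)) :
    gperm N j s p ∈ JD (N+2) := by
  rw [mem_JD_iff]
  refine ⟨c.gperm_odd, ?_, c.gperm_invol, ?_, ?_⟩
  · intro a ha
    have ha' : (N:ℤ) + 2 < |a| := by push_cast at ha; omega
    rw [c.gperm_apply]
    exact c.g_fix a ha'
  · rw [c.negOnes_step]
    obtain ⟨k, hk⟩ := hev
    rcases c.hs with rfl | rfl
    · rw [if_pos rfl]; exact ⟨k, by omega⟩
    · rw [if_neg (by norm_num)]; exact ⟨k + 1, by omega⟩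
  · intro i hi1 hi2
    have hi2' : i ≤ (N:ℤ) + 2 := by push_cast at hi2; omega
    rw [c.gperm_apply]
    exact c.g_fpf i hi1 hi2'

end Ctx
lemma Fm_eq_top {N : ℕ} {j : ℤ} (hj : 1 ≤ j) (hjN : j ≤ (N:ℤ)+1) (b : ℤ) :
    Fm j b = (N:ℤ)+2 ↔ b = (N:ℤ)+1 := by
  simp only [Fm]; split_ifs <;> omega

lemma Fm_eq_bot {N : ℕ} {j : ℤ} (hj : 1 ≤ j) (hjN : j ≤ (N:ℤ)+1) (b : ℤ) :
    Fm j b = -((N:ℤ)+2) ↔ b = -((N:ℤ)+1) := by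
  simp only [Fm]; split_ifs <;> omega

lemma Hm_ne_top {N : ℕ} {j : ℤ} (hj : 1 ≤ j) (hjN : j ≤ (N:ℤ)+1) (x : ℤ)
    (h1 : x ≠ (N:ℤ)+2) (h2 : x ≠ j) : Hm j x ≠ (N:ℤ)+1 := by
  simp only [Hm]; split_ifs <;> omega

lemma Hm_ne_bot {N : ℕ} {j : ℤ} (hj : 1 ≤ j) (hjN : j ≤ (N:ℤ)+1) (x : ℤ)
    (h1 : x ≠ -((N:ℤ)+2)) (h2 : x ≠ -j) : Hm j x ≠ -((N:ℤ)+1) := by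
  simp only [Hm]; split_ifs <;> omega

/-- The raw reduction map, inverse to the insertion. -/
def pfun (N : ℕ) (j : ℤ) (π : Equiv.Perm ℤ) (b : ℤ) : ℤ :=
  if b = (N:ℤ)+1 then b else if b = -((N:ℤ)+1) then b else Hm j (π (Fm j b))

/-- Bundle of hypotheses for the reduction direction. -/
structure RCtx (N : ℕ) (j s : ℤ) (π : Equiv.Perm ℤ) : Prop where
  hj : 1 ≤ j
  hjN : j ≤ (N : ℤ) + 1
  hs : s = 1 ∨ s = -1
  hodd : ∀ a, π (-a) = -(π a)
  hfix : ∀ a : ℤ, (N : ℤ) + 2 < |a| → π a = a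
  hinv : ∀ a, π (π a) = a
  hfpf : ∀ i : ℤ, 1 ≤ i → i ≤ (N : ℤ) + 2 → π i ≠ i ∧ π i ≠ -i
  htop : π ((N : ℤ) + 2) = s * j
  hjval : π j = s * ((N : ℤ) + 2)

namespace RCtx

variable {N : ℕ} {j s : ℤ} {π : Equiv.Perm ℤ}

lemma pi_ne_j (c : RCtx N j s π) (x : ℤ) (h1 : x ≠ (N:ℤ)+2) (h2 : x ≠ -((N:ℤ)+2)) :
    π x ≠ j ∧ π x ≠ -j := by
  constructor
  · intro h
    have hx : x = π j := by rw [← h, c.hinv]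
    rw [c.hjval] at hx
    rcases c.hs with rfl | rfl <;> simp at hx <;> omega
  · intro h
    have hx : x = π (-j) := by rw [← h, c.hinv]
    rw [c.hodd, c.hjval] at hx
    rcases c.hs with rfl | rfl <;> simp at hx <;> omega

lemma pi_ne_n (c : RCtx N j s π) (x : ℤ) (h1 : x ≠ j) (h2 : x ≠ -j) :
    π x ≠ (N:ℤ)+2 ∧ π x ≠ -((N:ℤ)+2) := by
  constructor
  · intro h
    have hx : x = π ((N:ℤ)+2) := by rw [← h, c.hinv]
    rw [c.htop] at hx
    rcases c.hs with rfl | rfl <;> simp at hx <;> omega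
  · intro h
    have hx : x = π (-((N:ℤ)+2)) := by rw [← h, c.hinv]
    rw [c.hodd, c.htop] at hx
    rcases c.hs with rfl | rfl <;> simp at hx <;> omega

lemma pfun_generic (c : RCtx N j s π) (b : ℤ) (h1 : b ≠ (N:ℤ)+1) (h2 : b ≠ -((N:ℤ)+1)) :
    pfun N j π b = Hm j (π (Fm j b)) := by
  unfold pfun
  rw [if_neg h1, if_neg h2]

/-- In the generic branch, the intermediate value avoids all special points. -/
lemma pfun_mid (c : RCtx N j s π) (b : ℤ) (h1 : b ≠ (N:ℤ)+1) (h2 : b ≠ -((N:ℤ)+1)) :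
    π (Fm j b) ≠ j ∧ π (Fm j b) ≠ -j ∧ π (Fm j b) ≠ (N:ℤ)+2 ∧ π (Fm j b) ≠ -((N:ℤ)+2) := by
  have hy1 : Fm j b ≠ (N:ℤ)+2 := by rw [Ne, Fm_eq_top c.hj c.hjN]; exact h1
  have hy2 : Fm j b ≠ -((N:ℤ)+2) := by rw [Ne, Fm_eq_bot c.hj c.hjN]; exact h2
  have hy3 := Fm_ne_j j c.hj b
  have f1 := c.pi_ne_j (Fm j b) hy1 hy2
  have f2 := c.pi_ne_n (Fm j b) hy3.1 hy3.2
  exact ⟨f1.1, f1.2, f2.1, f2.2⟩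

lemma pfun_invol (c : RCtx N j s π) : Function.Involutive (pfun N j π) := by
  intro b
  by_cases h1 : b = (N:ℤ)+1
  · subst h1; unfold pfun; rw [if_pos rfl, if_pos rfl]
  by_cases h2 : b = -((N:ℤ)+1)
  · subst h2; unfold pfun; rw [if_neg h1, if_pos rfl, if_neg h1, if_pos rfl]
  obtain ⟨m1, m2, m3, m4⟩ := c.pfun_mid b h1 h2
  rw [c.pfun_generic b h1 h2]
  have hc1 : Hm j (π (Fm j b)) ≠ (N:ℤ)+1 := Hm_ne_top c.hj c.hjN _ m3 m1
  have hc2 : Hm j (π (Fm j b)) ≠ -((N:ℤ)+1) := Hm_ne_bot c.hj c.hjN _ m4 m2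
  rw [c.pfun_generic _ hc1 hc2, Fm_Hm j c.hj _ m1 m2, c.hinv, Hm_Fm j c.hj]

lemma pfun_odd (c : RCtx N j s π) (b : ℤ) : pfun N j π (-b) = -(pfun N j π b) := by
  have hj := c.hj
  by_cases h1 : b = (N:ℤ)+1
  · subst h1
    unfold pfun
    rw [if_pos rfl, if_neg (by omega), if_pos rfl]
  by_cases h2 : b = -((N:ℤ)+1)
  · subst h2
    unfold pfun
    rw [if_neg h1, if_pos rfl, if_pos (by rw [neg_neg]), neg_neg]
  rw [c.pfun_generic b h1 h2, c.pfun_generic (-b) (by omega) (by omega),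
    Fm_neg j hj, c.hodd, Hm_neg j hj]

lemma pfun_fix (c : RCtx N j s π) (b : ℤ) (h : (N:ℤ) < |b|) : pfun N j π b = b := by
  have hj := c.hj
  have hjN := c.hjN
  by_cases h1 : b = (N:ℤ)+1
  · subst h1; unfold pfun; rw [if_pos rfl]
  by_cases h2 : b = -((N:ℤ)+1)
  · subst h2; unfold pfun; rw [if_neg h1, if_pos rfl]
  rw [c.pfun_generic b h1 h2]
  rcases abs_cases b with ⟨he, h0⟩ | ⟨he, h0⟩
  · have hb : (N:ℤ)+2 ≤ b := by omega
    have h5 : Fm j b = b + 1 := by simp only [Fm]; rw [if_pos (by omega)]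
    have h6 : π (b+1) = b+1 := c.hfix _ (by rw [abs_of_nonneg (by omega)]; omega)
    rw [h5, h6]
    simp only [Hm]; rw [if_pos (by omega)]; ring
  · have hb : b ≤ -((N:ℤ)+2) := by omega
    have h5 : Fm j b = b - 1 := by simp only [Fm]; rw [if_neg (by omega), if_pos (by omega)]
    have h6 : π (b-1) = b-1 := c.hfix _ (by rw [abs_of_nonpos (by omega)]; omega)
    rw [h5, h6]
    simp only [Hm]; rw [if_neg (by omega), if_pos (by omega)]; ring

lemma pfun_fpf (c : RCtx N j s π) (b : ℤ) (h1 : 1 ≤ b) (h2 : b ≤ (N:ℤ)) :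
    pfun N j π b ≠ b ∧ pfun N j π b ≠ -b := by
  have hj := c.hj
  have hjN := c.hjN
  have hg := c.pfun_generic b (by omega) (by omega)
  obtain ⟨m1, m2, m3, m4⟩ := c.pfun_mid b (by omega) (by omega)
  have hFb := Fm_bounds N j b hj hjN h1 h2
  constructor
  · intro h
    rw [hg] at h
    have h3 := congrArg (Fm j) h
    rw [Fm_Hm j hj _ m1 m2] at h3
    exact (c.hfpf (Fm j b) (by omega) (by omega)).1 h3
  · intro h
    rw [hg] at h
    have h3 := congrArg (Fm j) h
    rw [Fm_Hm j hj _ m1 m2, Fm_neg j hj] at h3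
    exact (c.hfpf (Fm j b) (by omega) (by omega)).2 h3

end RCtx

open scoped Classical in
/-- The reduction map as a permutation (junk value `1` when not involutive). -/
def pperm (N : ℕ) (j : ℤ) (π : Equiv.Perm ℤ) : Equiv.Perm ℤ :=
  if h : Function.Involutive (pfun N j π) then h.toPerm else 1

namespace RCtx

variable {N : ℕ} {j s : ℤ} {π : Equiv.Perm ℤ}

lemma pperm_apply (c : RCtx N j s π) (b : ℤ) : pperm N j π b = pfun N j π b := by
  rw [pperm, dif_pos c.pfun_invol]
  rfl

/-- The reduced permutation satisfies the forward context. -/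
lemma toCtx (c : RCtx N j s π) : Ctx N j s (pperm N j π) where
  hj := c.hj
  hjN := c.hjN
  hs := c.hs
  hodd a := by rw [c.pperm_apply, c.pperm_apply]; exact c.pfun_odd a
  hfix a ha := by rw [c.pperm_apply]; exact c.pfun_fix a ha
  hinv a := by rw [c.pperm_apply, c.pperm_apply]; exact c.pfun_invol a
  hfpf a h1 h2 := by rw [c.pperm_apply]; exact c.pfun_fpf a h1 h2

/-- Inserting back the reduced permutation recovers `π`. -/
lemma insertion_inverse (c : RCtx N j s π) : gperm N j s (pperm N j π) = π := by
  have hj := c.hj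
  have hjN := c.hjN
  have hctx := c.toCtx
  apply Equiv.ext
  intro a
  rw [hctx.gperm_apply]
  by_cases h1 : a = j
  · subst h1; rw [hctx.g_at_j, c.hjval]
  by_cases h2 : a = -j
  · subst h2; rw [hctx.g_at_negj, c.hodd, c.hjval]
  by_cases h3 : a = (N:ℤ)+2
  · subst h3; rw [hctx.g_at_n, c.htop]
  by_cases h4 : a = -((N:ℤ)+2)
  · subst h4; rw [hctx.g_at_negn, c.hodd, c.htop]
  rw [hctx.g_T a h1 h2 h3 h4]
  have hH1 : Hm j a ≠ (N:ℤ)+1 := Hm_ne_top hj hjN a h3 h1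
  have hH2 : Hm j a ≠ -((N:ℤ)+1) := Hm_ne_bot hj hjN a h4 h2
  rw [c.pperm_apply, c.pfun_generic _ hH1 hH2, Fm_Hm j hj a h1 h2]
  have hpa := c.pi_ne_j a h3 h4
  rw [Fm_Hm j hj _ hpa.1 hpa.2]

end RCtx
/-- The finite index set encoding `(j, s, p)`. -/
def Afin (N : ℕ) (hfin : (JD N).Finite) : Finset ((ℤ × ℤ) × Equiv.Perm ℤ) :=
  ((Finset.Icc (1:ℤ) ((N:ℤ)+1)) ×ˢ ({-1, 1} : Finset ℤ)) ×ˢ hfin.toFinset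

lemma mem_Afin {N : ℕ} {hfin : (JD N).Finite} (x : (ℤ × ℤ) × Equiv.Perm ℤ) :
    x ∈ Afin N hfin ↔ (1 ≤ x.1.1 ∧ x.1.1 ≤ (N:ℤ)+1) ∧ (x.1.2 = -1 ∨ x.1.2 = 1) ∧
      x.2 ∈ JD N := by
  unfold Afin
  simp [Finset.mem_product, Finset.mem_Icc, and_assoc]

lemma mk_ctx {N : ℕ} {j s : ℤ} {p : Equiv.Perm ℤ} (h1 : 1 ≤ j) (h2 : j ≤ (N:ℤ)+1)
    (hs : s = -1 ∨ s = 1) (hp : p ∈ JD N) : Ctx N j s p := by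
  obtain ⟨hodd, hfix, hinv, heven, hfpf⟩ := (mem_JD_iff N p).mp hp
  exact ⟨h1, h2, hs.symm, hodd, hfix, hinv, hfpf⟩

lemma image_eq (N : ℕ) (hfin : (JD N).Finite) :
    (fun x : (ℤ × ℤ) × Equiv.Perm ℤ => gperm N x.1.1 x.1.2 x.2) '' ↑(Afin N hfin)
      = JD (N+2) := by
  apply Set.Subset.antisymm
  · rintro _ ⟨⟨⟨j, s⟩, p⟩, hx, rfl⟩
    rw [Finset.mem_coe, mem_Afin] at hx
    have c := mk_ctx hx.1.1 hx.1.2 hx.2.1 hx.2.2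
    exact c.mem_step ((mem_JD_iff N p).mp hx.2.2).2.2.2.1
  · intro π hπ
    obtain ⟨hodd, hfixc, hinv, heven, hfpfc⟩ := (mem_JD_iff (N+2) π).mp hπ
    have hfix : ∀ a : ℤ, (N:ℤ)+2 < |a| → π a = a := by
      intro a ha; exact hfixc a (by push_cast; omega)
    have hfpf : ∀ i : ℤ, 1 ≤ i → i ≤ (N:ℤ)+2 → π i ≠ i ∧ π i ≠ -i := by
      intro i h1 h2; exact hfpfc i h1 (by push_cast; omega)
    set v := π ((N:ℤ)+2) with hv
    have hvne := hfpf ((N:ℤ)+2) (by omega) (by omega)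
    have hπv : π v = (N:ℤ)+2 := hinv _
    have habs : |v| ≤ (N:ℤ)+2 := by
      by_contra hc
      push_neg at hc
      have h := hfix v hc
      rw [h] at hπv
      omega
    have hv0 : v ≠ 0 := by
      intro h
      rw [h] at hπv
      have h0 := hodd 0
      simp at h0
      omega
    set j : ℤ := |v| with hj
    set s : ℤ := if 0 ≤ v then 1 else -1 with hs
    have hsj : s * j = v := by
      rcases abs_cases v with ⟨he, h0⟩ | ⟨he, h0⟩
      · rw [hj, he, hs, if_pos h0]; ring
      · rw [hj, he, hs, if_neg (by omega)]; ring
    have hjb : 1 ≤ j ∧ j ≤ (N:ℤ)+1 := by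
      rcases abs_cases v with ⟨he, h0⟩ | ⟨he, h0⟩ <;> rw [hj, he] <;>
        constructor <;> first | omega | (have := hvne.1; have := hvne.2; omega)
    have htop : π ((N:ℤ)+2) = s * j := by rw [hsj, hv]
    have hjval : π j = s * ((N:ℤ)+2) := by
      rcases abs_cases v with ⟨he, h0⟩ | ⟨he, h0⟩
      · rw [hj, he, hs, if_pos h0, one_mul]; exact hπv
      · rw [hj, he, hs, if_neg (by omega)]
        rw [hodd, hπv]; ring
    have hss : s = 1 ∨ s = -1 := by
      rcases le_or_gt 0 v with h | h
      · left; rw [hs, if_pos h]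
      · right; rw [hs, if_neg (by omega)]
    have rc : RCtx N j s π := ⟨hjb.1, hjb.2, hss, hodd, hfix, hinv, hfpf, htop, hjval⟩
    have hctx := rc.toCtx
    refine ⟨⟨⟨j, s⟩, pperm N j π⟩, ?_, rc.insertion_inverse⟩
    rw [Finset.mem_coe, mem_Afin]
    refine ⟨hjb, Or.symm rc.hs, ?_⟩
    rw [mem_JD_iff]
    refine ⟨fun a => hctx.hodd a, fun a ha => hctx.hfix a (by push_cast at ha; omega),
      hctx.hinv, ?_, fun i h1 h2 => hctx.hfpf i h1 (by push_cast; omega)⟩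
    have hx := hctx.negOnes_step
    rw [rc.insertion_inverse] at hx
    rw [hx] at heven
    rcases rc.hs with h | h
    · rw [h, if_pos rfl] at heven
      simpa using heven
    · rw [h, if_neg (by norm_num)] at heven
      have h2 : Even 2 := ⟨1, rfl⟩
      exact (Nat.even_add.mp heven).mpr h2

lemma inj_on (N : ℕ) (hfin : (JD N).Finite) :
    Set.InjOn (fun x : (ℤ × ℤ) × Equiv.Perm ℤ => gperm N x.1.1 x.1.2 x.2)
      ↑(Afin N hfin) := by
  rintro ⟨⟨j1, s1⟩, p1⟩ h1 ⟨⟨j2, s2⟩, p2⟩ h2 heq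
  rw [Finset.mem_coe, mem_Afin] at h1 h2
  dsimp only at h1 h2 heq ⊢
  have c1 := mk_ctx h1.1.1 h1.1.2 h1.2.1 h1.2.2
  have c2 := mk_ctx h2.1.1 h2.1.2 h2.2.1 h2.2.2
  have hval := congrArg (fun e : Equiv.Perm ℤ => e ((N:ℤ)+2)) heq
  rw [c1.gperm_apply, c2.gperm_apply, c1.g_at_n, c2.g_at_n] at hval
  have hj1 := c1.hj
  have hj2 := c2.hj
  have hjs : j1 = j2 ∧ s1 = s2 := by
    rcases c1.hs with rfl | rfl <;> rcases c2.hs with rfl | rfl <;>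
      constructor <;> omega
  obtain ⟨rfl, rfl⟩ := hjs
  have hp : p1 = p2 := by
    have key : ∀ x : ℤ, 1 ≤ x → x ≤ (N:ℤ) → p1 x = p2 x := by
      intro x hx1 hx2
      have e1 := c1.g_Fm x hx1 hx2
      have e2 := c2.g_Fm x hx1 hx2
      rw [heq] at e1
      rw [e1] at e2
      exact (Fm_inj j1 c1.hj _ _).mp e2
    apply Equiv.ext
    intro b
    rcases le_or_gt b (-1) with hb | hb
    · rcases le_or_gt b (-(N:ℤ)-1) with hb2 | hb2
      · rw [c1.hfix b (by rw [abs_of_nonpos (by omega)]; omega),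
          c2.hfix b (by rw [abs_of_nonpos (by omega)]; omega)]
      · have hodd1 := c1.hodd (-b)
        have hodd2 := c2.hodd (-b)
        rw [neg_neg] at hodd1 hodd2
        rw [hodd1, hodd2, key (-b) (by omega) (by omega)]
    rcases le_or_gt b 0 with hb0 | hb0
    · have hb00 : b = 0 := by omega
      rw [hb00, c1.p_zero, c2.p_zero]
    rcases le_or_gt b (N:ℤ) with hbN | hbN
    · exact key b (by omega) hbN
    · rw [c1.hfix b (by rw [abs_of_nonneg (by omega)]; omega),
        c2.hfix b (by rw [abs_of_nonneg (by omega)]; omega)]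
  rw [hp]
lemma JD_zero : JD 0 = {1} := by
  ext π
  rw [mem_JD_iff]
  constructor
  · rintro ⟨hodd, hfix, hinv, heven, hfpf⟩
    rw [Set.mem_singleton_iff]
    apply Equiv.ext
    intro a
    rcases eq_or_ne a 0 with rfl | ha
    · have h0 := hodd 0
      simp only [neg_zero] at h0
      simpa using (by omega : π 0 = 0)
    · have hlt : ((0:ℕ):ℤ) < |a| := by
        simp only [Nat.cast_zero]
        exact abs_pos.mpr ha
      rw [hfix a hlt]
      simp
  · intro h
    rw [Set.mem_singleton_iff] at h
    subst h
    refine ⟨fun a => by simp, fun a _ => by simp, fun a => by simp, ?_, ?_⟩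
    · have : negOnes 0 1 = 0 := by
        unfold negOnes
        rw [show Finset.Icc (1:ℤ) ((0:ℕ):ℤ) = ∅ from by
          apply Finset.Icc_eq_empty; norm_num]
        simp
        rfl
      rw [this]
      exact Even.zero
    · intro i h1 h2
      simp only [Nat.cast_zero] at h2
      omega

lemma JD_zero_finite : (JD 0).Finite := by
  rw [JD_zero]
  exact Set.finite_singleton 1

lemma JDPoly_zero : JDPoly 0 = 1 := by
  unfold JDPoly
  rw [JD_zero, finsum_mem_singleton]
  have h : invDStat 0 1 = 0 := by
    unfold invDStat winInv negPairs
    rw [show Finset.Icc (1:ℤ) ((0:ℕ):ℤ) = ∅ from by apply Finset.Icc_eq_empty; norm_num]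
    simp
  rw [h, pow_zero]

lemma JD_step_finite (N : ℕ) (hfin : (JD N).Finite) : (JD (N+2)).Finite := by
  rw [← image_eq N hfin]
  exact (Afin N hfin).finite_toSet.image _

lemma JDPoly_eq_finsum (N : ℕ) (hfin : (JD N).Finite) :
    JDPoly N = ∑ p ∈ hfin.toFinset, X ^ (invDStat N p) := by
  have h := finsum_mem_coe_finset (fun π => (X : Polynomial ℚ) ^ invDStat N π) hfin.toFinset
  rw [Set.Finite.coe_toFinset] at h
  exact h ▸ rfl

lemma Icc_int_eq_image (N : ℕ) :
    Finset.Icc (1:ℤ) ((N:ℤ)+1) = (Finset.Icc (1:ℕ) (N+1)).image (fun k : ℕ => (k:ℤ)) := by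
  ext a
  simp only [Finset.mem_Icc, Finset.mem_image]
  constructor
  · intro h
    exact ⟨a.toNat, by omega, by omega⟩
  · rintro ⟨k, hk, rfl⟩
    omega

lemma JDPoly_step (N : ℕ) (hfin : (JD N).Finite) :
    JDPoly (N+2) = JDPoly N * ∑ k ∈ Finset.Icc 1 (N+1),
      ((X : Polynomial ℚ)^(2*(N+1-k)+1) + X^(2*N+2*k-1)) := by
  rw [show JDPoly (N+2) = ∑ᶠ π ∈ JD (N+2), (X : Polynomial ℚ) ^ invDStat (N+2) π from rfl]
  rw [← image_eq N hfin, finsum_mem_image (inj_on N hfin), finsum_mem_coe_finset]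
  rw [Afin, Finset.sum_product, Finset.sum_product]
  rw [Icc_int_eq_image N, Finset.sum_image (fun a _ b _ h => Nat.cast_injective h)]
  rw [Finset.mul_sum]
  refine Finset.sum_congr rfl fun k hk => ?_
  rw [Finset.mem_Icc] at hk
  rw [Finset.sum_pair (by norm_num : (-1:ℤ) ≠ 1), ← Finset.sum_add_distrib]
  rw [JDPoly_eq_finsum N hfin, Finset.sum_mul]
  refine Finset.sum_congr rfl fun p hp => ?_
  have hpJD : p ∈ JD N := (Set.Finite.mem_toFinset hfin).mp hp
  have hk1 : (1:ℤ) ≤ (k:ℤ) := by omega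
  have hk2 : (k:ℤ) ≤ (N:ℤ)+1 := by omega
  have cm : Ctx N ((k:ℕ):ℤ) (-1) p := mk_ctx hk1 hk2 (Or.inl rfl) hpJD
  have c1 : Ctx N ((k:ℕ):ℤ) 1 p := mk_ctx hk1 hk2 (Or.inr rfl) hpJD
  dsimp only
  rw [cm.invD_step_neg, c1.invD_step_pos, pow_add, pow_add, mul_add]
  ring
lemma sum_split (N : ℕ) :
    ∑ k ∈ Finset.Icc 1 (N+1), ((X:Polynomial ℚ)^(2*(N+1-k)+1) + X^(2*N+2*k-1))
      = ((X:Polynomial ℚ) + X^(2*N+1)) * ∑ i ∈ Finset.range (N+1), (X^2)^i := by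
  rw [Finset.sum_add_distrib, add_mul, Finset.mul_sum, Finset.mul_sum]
  congr 1
  · refine Finset.sum_nbij' (fun k => N+1-k) (fun i => N+1-i) ?_ ?_ ?_ ?_ ?_
    · intro a ha; simp only [Finset.mem_Icc, Finset.mem_range] at *; omega
    · intro a ha; simp only [Finset.mem_Icc, Finset.mem_range] at *; omega
    · intro a ha; simp only [Finset.mem_Icc] at ha; omega
    · intro a ha; simp only [Finset.mem_range] at ha; omega
    · intro a ha
      rw [← pow_mul, ← pow_succ']
  · refine Finset.sum_nbij' (fun k => k-1) (fun i => i+1) ?_ ?_ ?_ ?_ ?_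
    · intro a ha; simp only [Finset.mem_Icc, Finset.mem_range] at *; omega
    · intro a ha; simp only [Finset.mem_Icc, Finset.mem_range] at *; omega
    · intro a ha; simp only [Finset.mem_Icc] at ha; omega
    · intro a ha; omega
    · intro a ha
      simp only [Finset.mem_Icc] at ha
      rw [← pow_mul, ← pow_add]
      congr 1
      omega

lemma geom_poly (K : ℕ) :
    (1 - (X:Polynomial ℚ)^2) * ∑ i ∈ Finset.range K, ((X:Polynomial ℚ)^2)^i
      = 1 - X^(2*K) := by
  have h := geom_sum_mul ((X:Polynomial ℚ)^2) K
  have h2 : (1 - (X:Polynomial ℚ)^2) * ∑ i ∈ Finset.range K, ((X:Polynomial ℚ)^2)^i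
      = -((((X:Polynomial ℚ)^2)^K) - 1) := by rw [← h]; ring
  rw [h2, ← pow_mul]
  ring

lemma closed_form (m : ℕ) : (JD (2*m)).Finite ∧
    (1 - (X:Polynomial ℚ)^2)^m * JDPoly (2*m+2)
      = 2 * X^(m+1) * ∏ i ∈ Finset.Icc 1 m, ((1:Polynomial ℚ) + X^(4*i)) * (1 - X^(4*i+2)) := by
  induction m with
  | zero =>
    refine ⟨by rw [show 2*0 = 0 by ring]; exact JD_zero_finite, ?_⟩
    have hs := JDPoly_step 0 JD_zero_finite
    rw [JDPoly_zero, one_mul] at hs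
    rw [show 2*0+2 = 0+2 by ring, hs]
    rw [show (0:ℕ)+1 = 1 from rfl, Finset.Icc_self, Finset.sum_singleton]
    rw [show Finset.Icc 1 0 = (∅ : Finset ℕ) from rfl, Finset.prod_empty]
    norm_num
    ring
  | succ m ih =>
    obtain ⟨hfin, hform⟩ := ih
    have hfin2 : (JD (2*m+2)).Finite := JD_step_finite (2*m) hfin
    refine ⟨by rw [show 2*(m+1) = 2*m+2 by ring]; exact hfin2, ?_⟩
    have hstep := JDPoly_step (2*m+2) hfin2
    have hg := geom_poly (2*m+2+1)
    have hXg : (1 - (X:Polynomial ℚ)^2)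
          * (((X:Polynomial ℚ) + X^(2*(2*m+2)+1)) * ∑ i ∈ Finset.range (2*m+2+1), ((X:Polynomial ℚ)^2)^i)
        = ((X:Polynomial ℚ) + X^(2*(2*m+2)+1)) * (1 - X^(2*(2*m+2+1))) := by
      calc (1 - (X:Polynomial ℚ)^2)
          * (((X:Polynomial ℚ) + X^(2*(2*m+2)+1)) * ∑ i ∈ Finset.range (2*m+2+1), ((X:Polynomial ℚ)^2)^i)
          = ((X:Polynomial ℚ) + X^(2*(2*m+2)+1))
            * ((1 - (X:Polynomial ℚ)^2) * ∑ i ∈ Finset.range (2*m+2+1), ((X:Polynomial ℚ)^2)^i) := by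
            ring
        _ = ((X:Polynomial ℚ) + X^(2*(2*m+2)+1)) * (1 - X^(2*(2*m+2+1))) := by rw [hg]
    calc (1 - (X:Polynomial ℚ)^2)^(m+1) * JDPoly (2*(m+1)+2)
        = ((1 - (X:Polynomial ℚ)^2)^m * JDPoly (2*m+2))
          * ((1 - (X:Polynomial ℚ)^2)
            * (((X:Polynomial ℚ) + X^(2*(2*m+2)+1)) * ∑ i ∈ Finset.range (2*m+2+1), ((X:Polynomial ℚ)^2)^i)) := by
          rw [show 2*(m+1)+2 = (2*m+2)+2 by ring, hstep, sum_split (2*m+2)]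
          ring
      _ = (2 * X^(m+1) * ∏ i ∈ Finset.Icc 1 m, ((1:Polynomial ℚ) + X^(4*i)) * (1 - X^(4*i+2)))
          * (((X:Polynomial ℚ) + X^(2*(2*m+2)+1)) * (1 - X^(2*(2*m+2+1)))) := by
          rw [hform, hXg]
      _ = 2 * X^(m+1+1) * ∏ i ∈ Finset.Icc 1 (m+1), ((1:Polynomial ℚ) + X^(4*i)) * (1 - X^(4*i+2)) := by
          rw [Finset.prod_Icc_succ_top (by omega : 1 ≤ m+1)]
          ring
theorem typeD_fpf_involution_inversion_closed_form (n : ℕ) (h2 : 2 ≤ n) (he : Even n) :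
    (1 - X ^ 2) ^ (n / 2 - 1) * JDPoly n =
      2 * X ^ (n / 2) *
        ∏ i ∈ Finset.Icc 1 (n / 2 - 1), (1 + X ^ (4 * i)) * (1 - X ^ (4 * i + 2)) := by
  obtain ⟨t, ht⟩ := he
  obtain ⟨m, rfl⟩ : ∃ m, t = m + 1 := ⟨t - 1, by omega⟩
  have hn : n = 2*m+2 := by omega
  subst hn
  rw [show (2*m+2) / 2 - 1 = m from by omega, show (2*m+2) / 2 = m + 1 from by omega]
  exact (closed_form m).2
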